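/- The sentence ψ := [x][y]φ(x,y) of InqBT+[x], where φ(x,y) := ( =(x,y) ∧ =(y,x) ∧ ∃ⁱz (z ≠ y) → ∃ⁱu (u ≠ x) ), defines finiteness: for every model M over the empty vocabulary, M ⊨ ψ (i.e., ψ is supported by some/any nonempty team) if and only if the domain of M is finite. -/
import Mathlib


/-- A first-order signature. -/
structure Sig where
  Func : Type
  farity : Func → ℕ
  Rel : Type
  rarity : Rel → ℕ

/-- Terms over a signature; variables are natural numbers. -/
inductive Tm (σ : Sig) : Type where
  | var : ℕ → Tm σ
  | func : (f : σ.Func) → (Fin (σ.farity f) → Tm σ) → Tm σ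

/-- Formulas of InqBT+[x]: atoms, ⊥, ∧, inquisitive disjunction ⩒ (`ivee`),
    →, ∀ (`all`), inquisitive existential ∃ⁱ (`iex`), and [x] (`box`). -/
inductive Fm (σ : Sig) : Type where
  | rel : (R : σ.Rel) → (Fin (σ.rarity R) → Tm σ) → Fm σ
  | eq : Tm σ → Tm σ → Fm σ
  | bot : Fm σ
  | and : Fm σ → Fm σ → Fm σ
  | ivee : Fm σ → Fm σ → Fm σ
  | imp : Fm σ → Fm σ → Fm σ
  | all : ℕ → Fm σ → Fm σ
  | iex : ℕ → Fm σ → Fm σ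
  | box : ℕ → Fm σ → Fm σ

/-- A first-order model. -/
structure Model (σ : Sig) where
  D : Type
  nonempty : Nonempty D
  interpFunc : (f : σ.Func) → (Fin (σ.farity f) → D) → D
  interpRel : (R : σ.Rel) → (Fin (σ.rarity R) → D) → Prop

variable {σ : Sig}

/-- Value of a term under an assignment. -/
def Tm.val (M : Model σ) (g : ℕ → M.D) : Tm σ → M.D
  | .var n => g n
  | .func f ts => M.interpFunc f (fun i => (ts i).val M g)

/-- Free variables of a term. -/
def Tm.fv : Tm σ → Finset ℕ
  | .var n => {n}
  | .func _ ts => Finset.univ.biUnion (fun i => (ts i).fv)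

/-- Free variables of a formula. -/
def Fm.fv : Fm σ → Finset ℕ
  | .rel _ ts => Finset.univ.biUnion (fun i => (ts i).fv)
  | .eq t₁ t₂ => t₁.fv ∪ t₂.fv
  | .bot => ∅
  | .and φ ψ => φ.fv ∪ ψ.fv
  | .ivee φ ψ => φ.fv ∪ ψ.fv
  | .imp φ ψ => φ.fv ∪ ψ.fv
  | .all x φ => φ.fv.erase x
  | .iex x φ => φ.fv.erase x
  | .box x φ => φ.fv.erase x

/-- The team `X[x↦d]`, assigning the constant value `d` to `x` throughout `X`. -/
def cext (M : Model σ) (X : Set (ℕ → M.D)) (x : ℕ) (d : M.D) : Set (ℕ → M.D) :=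
  (fun g => Function.update g x d) '' X

/-- The team `X[x↦D]`, assigning all possible values to `x`. -/
def allext (M : Model σ) (X : Set (ℕ → M.D)) (x : ℕ) : Set (ℕ → M.D) :=
  ⋃ d : M.D, cext M X x d

/-- Team-semantic support relation `M ⊨_X φ` for InqBT+[x]. -/
def Support (M : Model σ) : Fm σ → Set (ℕ → M.D) → Prop
  | .rel R ts, X => ∀ g ∈ X, M.interpRel R (fun i => (ts i).val M g)
  | .eq t₁ t₂, X => ∀ g ∈ X, t₁.val M g = t₂.val M g
  | .bot, X => X = ∅
  | .and φ ψ, X => Support M φ X ∧ Support M ψ X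
  | .ivee φ ψ, X => Support M φ X ∨ Support M ψ X
  | .imp φ ψ, X => ∀ Y ⊆ X, Support M φ Y → Support M ψ Y
  | .all x φ, X => ∀ d : M.D, Support M φ (cext M X x d)
  | .iex x φ, X => ∃ d : M.D, Support M φ (cext M X x d)
  | .box x φ, X => Support M φ (allext M X x)

/-- `?φ := φ ⩒ ¬φ`, where `¬φ := φ → ⊥`. -/
def qmark {σ : Sig} (φ : Fm σ) : Fm σ := .ivee φ (.imp φ .bot)

/-- The value question `λt := ∀x ?(x = t)` (with `x` not occurring in `t`). -/
def lamT {σ : Sig} (x : ℕ) (t : Tm σ) : Fm σ := .all x (qmark (.eq (.var x) t))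

/-- The value question `λz` for a variable `z` (bound variable chosen fresh). -/
def lamVar {σ : Sig} (z : ℕ) : Fm σ := lamT (z + 1) (.var z)

/-- The dependence atom `=(x, y) := λx → λy`. -/
def depF {σ : Sig} (x y : ℕ) : Fm σ := .imp (lamVar x) (lamVar y)

/-- `s ≠ t := (s = t) → ⊥`. -/
def neqF {σ : Sig} (s t : Tm σ) : Fm σ := .imp (.eq s t) .bot

/-- The empty vocabulary. -/
def EmptySig : Sig := ⟨Empty, fun f => f.elim, Empty, fun r => r.elim⟩

/-- The relational encoding of a team over the variables `x = 0`, `y = 1`: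
    `Y[x,y] = {(g(x), g(y)) | g ∈ Y}`. -/
def teamRel (M : Model EmptySig) (Y : Set (ℕ → M.D)) : Set (M.D × M.D) :=
  (fun g => (g 0, g 1)) '' Y

/-- `φ(x,y) := ( =(x,y) ∧ =(y,x) ∧ ∃ⁱz (z ≠ y) → ∃ⁱu (u ≠ x) )`,
    with `x = 0`, `y = 1`, `z = 2`, `u = 3`. -/
def phiXY : Fm EmptySig :=
  .imp (.and (depF 0 1) (.and (depF 1 0) (.iex 2 (neqF (.var 2) (.var 1)))))
       (.iex 3 (neqF (.var 3) (.var 0)))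

/-- The sentence `ψ := [x][y]φ(x,y)` of InqBT+[x]. -/
def psiFin : Fm EmptySig := .box 0 (.box 1 phiXY)

lemma support_neg_eq (M : Model σ) (t1 t2 : Tm σ) (W : Set (ℕ → M.D)) :
    Support M (.imp (.eq t1 t2) .bot) W ↔ ∀ g ∈ W, t1.val M g ≠ t2.val M g := by
  simp only [Support]
  constructor
  · intro h g hg hne
    have := h {g} (Set.singleton_subset_iff.mpr hg)
      (by intro g' hg'; rw [Set.mem_singleton_iff] at hg'; subst hg'; exact hne)
    exact absurd this (Set.singleton_ne_empty g)
  · intro h Y' hY' hs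
    ext g
    simp only [Set.mem_empty_iff_false, iff_false]
    intro hg
    exact h g (hY' hg) (hs g hg)

lemma mem_cext {M : Model σ} {X : Set (ℕ → M.D)} {x : ℕ} {d : M.D} {g : ℕ → M.D} :
    g ∈ cext M X x d ↔ ∃ h ∈ X, Function.update h x d = g := Iff.rfl

lemma support_eq_var (M : Model σ) (z w : ℕ) (W : Set (ℕ → M.D)) :
    Support M (.eq (.var z) (.var w)) W ↔ ∀ g ∈ W, g z = g w := Iff.rfl

lemma support_lam (M : Model σ) (z : ℕ) (Y : Set (ℕ → M.D)) :
    Support M (lamVar z) Y ↔ ∀ g ∈ Y, ∀ h ∈ Y, g z = h z := by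
  have hzz : z ≠ z + 1 := by omega
  constructor
  · intro h g hg h' hg'
    have := h (g z)
    rcases this with hpos | hneg
    · have h1 := hpos (Function.update g (z+1) (g z)) ⟨g, hg, rfl⟩
      have h2 := hpos (Function.update h' (z+1) (g z)) ⟨h', hg', rfl⟩
      simp only [Tm.val, Function.update_self, Function.update_of_ne hzz] at h1 h2
      exact h2
    · rw [support_neg_eq] at hneg
      have := hneg (Function.update g (z+1) (g z)) ⟨g, hg, rfl⟩
      simp only [Tm.val, Function.update_self, Function.update_of_ne hzz] at this
      exact absurd rfl this
  · intro h d
    by_cases hcase : ∃ g ∈ Y, g z = d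
    · left
      rintro g' ⟨g, hg, rfl⟩
      obtain ⟨g₀, hg₀, hg₀d⟩ := hcase
      simp only [Tm.val, Function.update_self, Function.update_of_ne hzz]
      rw [h g hg g₀ hg₀, hg₀d]
    · right
      rw [support_neg_eq]
      rintro g' ⟨g, hg, rfl⟩
      simp only [Tm.val, Function.update_self, Function.update_of_ne hzz]
      intro hdz
      exact hcase ⟨g, hg, hdz.symm⟩

lemma support_dep (M : Model σ) (x y : ℕ) (Y : Set (ℕ → M.D)) :
    Support M (depF x y) Y ↔ ∀ g ∈ Y, ∀ h ∈ Y, g x = h x → g y = h y := by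
  show (∀ Y' ⊆ Y, Support M (lamVar x) Y' → Support M (lamVar y) Y') ↔ _
  constructor
  · intro h g hg h' hg' hxx
    have := h {g, h'} (by
        intro a ha
        rcases ha with ha | ha
        · subst ha; exact hg
        · rw [Set.mem_singleton_iff] at ha; subst ha; exact hg')
      (by
        rw [support_lam]
        intro a ha b hb
        rcases ha with ha | ha <;> rcases hb with hb | hb <;>
          first
            | (subst ha; subst hb; rfl)
            | (rw [Set.mem_singleton_iff] at *; subst_vars; first | rfl | exact hxx | exact hxx.symm))
    rw [support_lam] at this
    exact this g (by left; rfl) h' (by right; rfl)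
  · intro h Y' hY' hlx
    rw [support_lam] at hlx ⊢
    intro g hg h' hg'
    exact h g (hY' hg) h' (hY' hg') (hlx g hg h' hg')

lemma support_iex_neq (M : Model σ) (z w : ℕ) (hzw : w ≠ z) (Y : Set (ℕ → M.D)) :
    Support M (.iex z (neqF (.var z) (.var w))) Y ↔ ∃ d : M.D, ∀ g ∈ Y, g w ≠ d := by
  show (∃ d : M.D, Support M (neqF (.var z) (.var w)) (cext M Y z d)) ↔ _
  unfold neqF
  constructor
  · rintro ⟨d, hd⟩
    rw [support_neg_eq] at hd
    refine ⟨d, fun g hg hgw => ?_⟩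
    have := hd (Function.update g z d) ⟨g, hg, rfl⟩
    simp only [Tm.val, Function.update_self, Function.update_of_ne hzw] at this
    exact this hgw.symm
  · rintro ⟨d, hd⟩
    refine ⟨d, ?_⟩
    rw [support_neg_eq]
    rintro g' ⟨g, hg, rfl⟩
    simp only [Tm.val, Function.update_self, Function.update_of_ne hzw]
    intro hdg
    exact hd g hg hdg.symm

/-- `ψ` defines finiteness: it is satisfied in a model (i.e. supported by
    some/any nonempty team) iff the domain is finite. -/
theorem stmt12 (M : Model EmptySig) (X : Set (ℕ → M.D)) (hX : X.Nonempty) :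
    Support M psiFin X ↔ Finite M.D := by

  classical
  obtain ⟨g₀, hg₀⟩ := hX
  set Z := allext M (allext M X 0) 1 with hZdef
  have hmemZ : ∀ (a b : M.D), Function.update (Function.update g₀ 0 a) 1 b ∈ Z := by
    intro a b
    exact Set.mem_iUnion.mpr ⟨b, Function.update g₀ 0 a,
      Set.mem_iUnion.mpr ⟨a, g₀, hg₀, rfl⟩, rfl⟩
  have hval0 : ∀ (a b : M.D), (Function.update (Function.update g₀ 0 a) 1 b) 0 = a := by
    intro a b
    rw [Function.update_of_ne (by omega), Function.update_self]
  have hval1 : ∀ (a b : M.D), (Function.update (Function.update g₀ 0 a) 1 b) 1 = b := by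
    intro a b
    rw [Function.update_self]
  have key : Support M psiFin X ↔
      ∀ Y ⊆ Z, Support M (.and (depF 0 1) (.and (depF 1 0)
          (.iex 2 (neqF (.var 2) (.var 1))))) Y →
        Support M (.iex 3 (neqF (.var 3) (.var 0))) Y := Iff.rfl
  rw [key]
  constructor
  · -- Support → Finite
    intro hsupp
    by_contra hfin
    have hinf : Infinite M.D := not_finite_iff_infinite.mp hfin
    let e := Infinite.natEmbedding M.D
    let f : M.D → M.D := fun d => if h : ∃ n, e n = d then e (h.choose + 1) else d
    have hf_pos : ∀ (d : M.D) (h : ∃ n, e n = d), f d = e (h.choose + 1) := by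
      intro d h; simp only [f, dif_pos h]
    have hf_neg : ∀ (d : M.D), ¬ (∃ n, e n = d) → f d = d := by
      intro d h; simp only [f, dif_neg h]
    have hf_range : ∀ d, f d ≠ e 0 := by
      intro d hd
      by_cases h : ∃ n, e n = d
      · rw [hf_pos d h] at hd
        exact Nat.succ_ne_zero _ (e.injective hd)
      · rw [hf_neg d h] at hd
        exact h ⟨0, hd.symm⟩
    have hf_inj : Function.Injective f := by
      intro a b hab
      by_cases ha : ∃ n, e n = a <;> by_cases hb : ∃ n, e n = b
      · rw [hf_pos a ha, hf_pos b hb] at hab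
        have h1 := e.injective hab
        rw [← ha.choose_spec, ← hb.choose_spec]
        exact congrArg e (Nat.succ_injective h1)
      · exfalso
        rw [hf_pos a ha, hf_neg b hb] at hab
        exact hb ⟨ha.choose + 1, hab⟩
      · exfalso
        rw [hf_neg a ha, hf_pos b hb] at hab
        exact ha ⟨hb.choose + 1, hab.symm⟩
      · rw [hf_neg a ha, hf_neg b hb] at hab
        exact hab
    set Y : Set (ℕ → M.D) := {g ∈ Z | g 1 = f (g 0)} with hYdef
    have hYZ : Y ⊆ Z := fun g hg => hg.1
    have hant : Support M (.and (depF 0 1) (.and (depF 1 0)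
        (.iex 2 (neqF (.var 2) (.var 1))))) Y := by
      refine ⟨?_, ?_, ?_⟩
      · rw [support_dep]
        intro g hg h hh h0
        rw [hg.2, hh.2, h0]
      · rw [support_dep]
        intro g hg h hh h1
        apply hf_inj
        rw [← hg.2, ← hh.2, h1]
      · rw [support_iex_neq M 2 1 (by omega) Y]
        refine ⟨e 0, fun g hg => ?_⟩
        rw [hg.2]
        exact hf_range (g 0)
    have hcon := hsupp Y hYZ hant
    rw [support_iex_neq M 3 0 (by omega) Y] at hcon
    obtain ⟨d, hd⟩ := hcon
    refine hd (Function.update (Function.update g₀ 0 d) 1 (f d)) ⟨hmemZ d (f d), ?_⟩ (hval0 d (f d))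
    rw [hval0, hval1]
  · -- Finite → Support
    intro hfin Y hYZ hant
    obtain ⟨h01, h10, hex⟩ := hant
    rw [support_dep] at h10
    rw [support_iex_neq M 2 1 (by omega) Y] at hex
    obtain ⟨c, hc⟩ := hex
    rw [support_iex_neq M 3 0 (by omega) Y]
    by_contra hno
    push_neg at hno
    let F : M.D → M.D := fun d => ((hno d).choose) 1
    have hFmem : ∀ d, (hno d).choose ∈ Y ∧ ((hno d).choose) 0 = d :=
      fun d => ⟨(hno d).choose_spec.1, (hno d).choose_spec.2⟩
    have hF_inj : Function.Injective F := by
      intro a b hab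
      have := h10 _ (hFmem a).1 _ (hFmem b).1 hab
      rw [(hFmem a).2, (hFmem b).2] at this
      exact this
    obtain ⟨d, hd⟩ := Finite.injective_iff_surjective.mp hF_inj c
    exact hc _ (hFmem d).1 hd
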